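/- Fix real constants k1, k2 and a real constant c ≠ 0, and let F : ℝ → ℝ be a smooth function. Define r, q, p : ℝ² → ℝ (functions of (y, t)) by r(y, t) = c, q(y, t) = F(y + ((1/3) k1 c² + (1/2) k2 c) t), and p(y, t) = −c q_y(y, t). Then (r, q, p) solves the single-peakon dynamical system of the (2+1)-dimensional gCH equation: r_y = 0, r_t = 0, q_y = −p/r, and q_t = −(1/3) k1 r p − (1/2) k2 p, pointwise on ℝ². -/

import Mathlib

/-- Partial derivative in the first (y) variable. -/
noncomputable def dY (f : ℝ → ℝ → ℝ) : ℝ → ℝ → ℝ := fun y t => deriv (fun y' => f y' t) y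

/-- Partial derivative in the second (t) variable. -/
noncomputable def dT (f : ℝ → ℝ → ℝ) : ℝ → ℝ → ℝ := fun y t => deriv (fun t' => f y t') t

/-- with `r = c`, `q(y,t) = F(y + ((1/3)k1c² + (1/2)k2c)t)` and
`p = −c q_y`, the triple `(r, q, p)` solves the single-peakon dynamical system of
the (2+1)-dimensional gCH equation:
`r_y = 0`, `r_t = 0`, `q_y = −p/r`, `q_t = −(1/3)k1 r p − (1/2)k2 p`. -/
theorem single_peakon_solves_2dgCH_peakon_system
    (k1 k2 c : ℝ) (hc : c ≠ 0) (F : ℝ → ℝ) (hF : ContDiff ℝ (⊤ : ℕ∞) F)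
    (r q p : ℝ → ℝ → ℝ)
    (hr : ∀ y t, r y t = c)
    (hq : ∀ y t, q y t = F (y + ((1/3) * k1 * c ^ 2 + (1/2) * k2 * c) * t))
    (hp : ∀ y t, p y t = -c * dY q y t) :
    ∀ y t,
      dY r y t = 0 ∧ dT r y t = 0 ∧
      dY q y t = -(p y t / r y t) ∧
      dT q y t = -(1/3) * k1 * r y t * p y t - (1/2) * k2 * p y t := by
  intro y t
  set a : ℝ := (1/3) * k1 * c ^ 2 + (1/2) * k2 * c with ha
  have hFd : ∀ x : ℝ, HasDerivAt F (deriv F x) x :=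
    fun x => (hF.differentiable (by simp) x).hasDerivAt
  have hqy : ∀ y t : ℝ, dY q y t = deriv F (y + a * t) := by
    intro y t
    have h : HasDerivAt (fun y' => q y' t) (deriv F (y + a * t)) y := by
      have := (hFd (y + a * t)).comp y
        ((hasDerivAt_id y).add_const (a * t) : HasDerivAt (fun y' : ℝ => y' + a * t) 1 y)
      simpa [hq, Function.comp_def] using this
    exact h.deriv
  have hqt : dT q y t = a * deriv F (y + a * t) := by
    have h : HasDerivAt (fun t' => q y t') (deriv F (y + a * t) * a) t := by
      have h2 : HasDerivAt (fun t' : ℝ => y + a * t') a t := by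
        simpa using ((hasDerivAt_id t).const_mul a).const_add y
      have := (hFd (y + a * t)).comp t h2
      simpa [hq, Function.comp_def] using this
    rw [dT, h.deriv]; ring
  have hry : dY r y t = 0 := by
    simp [dY, funext fun y' => hr y' t]
  have hrt : dT r y t = 0 := by
    simp [dT, funext fun t' => hr y t']
  refine ⟨hry, hrt, ?_, ?_⟩
  · rw [hp, hr, hqy]; field_simp
  · rw [hp, hr, hqt, hqy]; ring
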